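/- Let k₁,k₂>0, J_1(z)=k₁/z¹²−k₂/z⁶ for z>0 and +∞ for z≤0, J_2(z):=J_1(2z), J_CB:=J_1+J_2, and γ:=(2k₁/k₂)^{1/6}·((1+2^{-12})/(1+2^{-6}))^{1/6}. Define F(a,b):=J_2(γ+(a+b)/2)+(1/2)J_1(γ+a)+(1/2)J_1(γ+b)−J_CB(γ) (which is ≥0) and, for a real sequence r=(r_i)_{i≥1}, B_γ(r):=(1/2)J_1(γ+r_1)+Σ_{i=1}^∞ F(r_i,r_{i+1}) ∈ ℝ∪{+∞}. Then inf{B_γ(r) : r_i=0 for all sufficiently large i} = inf{B_γ(r) : r is a real sequence with r_i→0 as i→∞}. -/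

import Mathlib

open Filter Finset Set

noncomputable section

/-- The Lennard-Jones potential `J₁`, extended by `+∞` on `(-∞,0]`. -/
def LJ1 (k₁ k₂ : ℝ) (z : ℝ) : EReal :=
  if 0 < z then ((k₁ / z ^ 12 - k₂ / z ^ 6 : ℝ) : EReal) else ⊤

/-- The real-valued Lennard-Jones formula. -/
def LJ1r (k₁ k₂ : ℝ) (z : ℝ) : ℝ := k₁ / z ^ 12 - k₂ / z ^ 6

/-- The next-to-nearest neighbour potential `J₂(z) = J₁(2z)`. -/
def LJ2 (k₁ k₂ : ℝ) (z : ℝ) : EReal := LJ1 k₁ k₂ (2 * z)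

/-- The unique minimizer `γ` of `J_CB = J₁ + J₂` for `K = 2`. -/
def gammaNNN (k₁ k₂ : ℝ) : ℝ :=
  (2 * k₁ / k₂) ^ ((1 : ℝ) / 6) *
    ((1 + (2 : ℝ) ^ (-12 : ℤ)) / (1 + (2 : ℝ) ^ (-6 : ℤ))) ^ ((1 : ℝ) / 6)

/-- `J_CB(γ) = J₁(γ) + J₂(γ)` (a real number). -/
def JCBGammaNNN (k₁ k₂ : ℝ) : ℝ :=
  LJ1r k₁ k₂ (gammaNNN k₁ k₂) + LJ1r k₁ k₂ (2 * gammaNNN k₁ k₂)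

/-- `F(a,b) = J₂(γ+(a+b)/2) + ½J₁(γ+a) + ½J₁(γ+b) - J_CB(γ)`. -/
def Fcell (k₁ k₂ : ℝ) (a b : ℝ) : EReal :=
  LJ2 k₁ k₂ (gammaNNN k₁ k₂ + (a + b) / 2) +
    (((1 : ℝ) / 2 : ℝ) : EReal) * LJ1 k₁ k₂ (gammaNNN k₁ k₂ + a) +
    (((1 : ℝ) / 2 : ℝ) : EReal) * LJ1 k₁ k₂ (gammaNNN k₁ k₂ + b) -
    ((JCBGammaNNN k₁ k₂ : ℝ) : EReal)

/-- The boundary-layer functional `B_γ(r) = ½J₁(γ+r₁) + Σ_{i≥1} F(r_i,r_{i+1})`;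
here `r : ℕ → ℝ` with `r i` playing the role of `r_{i+1}`. -/
def Bgam (k₁ k₂ : ℝ) (r : ℕ → ℝ) : EReal :=
  (((1 : ℝ) / 2 : ℝ) : EReal) * LJ1 k₁ k₂ (gammaNNN k₁ k₂ + r 0) +
    ∑' i : ℕ, Fcell k₁ k₂ (r i) (r (i + 1))

/-!
Eventually vanishing sequences tend to `0`, which gives `≥`. Conversely, if `r → 0`, cutting `r`
off to `0` after index `M` replaces the tail `∑_{i ≥ M} F(r_i, r_{i+1})` by the single term
`F(r_M, 0)`; as `F ≥ 0` this raises `B_γ` by at most `F(r_M, 0)`, which tends to `F(0, 0) = 0`.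

The real content is `F ≥ 0`, i.e. `J₁(x + y) + ½J₁(x) + ½J₁(y) ≥ J_CB(γ)`. In the variables
`u = z⁻⁶` every `J₁` is the quadratic `k₁u² - k₂u`; convexity merges the two half terms into one at
the mean `p` of `x⁻⁶, y⁻⁶`, and AM-GM gives `(x + y)⁻⁶ ≤ p / 64`, leaving a two-variable quadratic
minimization.
-/

/- With `φ u = k₁ u² - k₂ u`, the bound is `min_u (φ u + φ (u / 64))`, the minimum of `J_CB` in
the variable `u = z⁻⁶`: the constraint `w ≤ p / 64` cuts off the unconstrained minimizer of
`φ w + φ p`, so the constrained minimum lies on `w = p / 64`. -/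
theorem quadratic_sum_lower_bound {k₁ k₂ w p : ℝ} (hk₁ : 0 < k₁) (hk₂ : 0 < k₂)
    (hwp : w ≤ p / 64) :
    -(4225 * k₂ ^ 2 / (16388 * k₁)) ≤ k₁ * w ^ 2 - k₂ * w + (k₁ * p ^ 2 - k₂ * p) := by
  have hc : 0 < 16388 * k₁ := by positivity
  suffices h : 0 ≤ 16388 * k₁ * (k₁ * w ^ 2 - k₂ * w + (k₁ * p ^ 2 - k₂ * p)) + 4225 * k₂ ^ 2 by
    have h' := div_nonneg h hc.le
    rw [add_div, mul_div_cancel_left₀ _ hc.ne'] at h'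
    linarith
  rcases le_or_gt (k₁ * p) (32 * k₂) with hp | hp
  · have hd : 0 ≤ k₁ * ((p / 64 - w) * (32 * k₂ - k₁ * p)) :=
      mul_nonneg hk₁.le (mul_nonneg (by linarith) (by linarith))
    nlinarith [sq_nonneg (4097 * k₁ * p - 2080 * k₂), sq_nonneg (k₁ * (p / 64 - w))]
  · nlinarith [sq_nonneg (2 * k₁ * w - k₂), mul_pos hk₁ hk₂, mul_pos hk₁ hk₁]

theorem JCBGammaNNN_eq {k₁ k₂ : ℝ} (hk₁ : 0 < k₁) (hk₂ : 0 < k₂) :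
    JCBGammaNNN k₁ k₂ = -(4225 * k₂ ^ 2 / (16388 * k₁)) := by
  have h6 : gammaNNN k₁ k₂ ^ 6 = k₁ / k₂ * (4097 / 2080) := by
    rw [gammaNNN, mul_pow, ← Real.rpow_natCast _ 6, ← Real.rpow_natCast _ 6,
      ← Real.rpow_mul (by positivity), ← Real.rpow_mul (by positivity)]
    norm_num
    ring
  have h12 : gammaNNN k₁ k₂ ^ 12 = (gammaNNN k₁ k₂ ^ 6) ^ 2 := by ring
  rw [JCBGammaNNN, LJ1r, LJ1r, mul_pow, mul_pow, h12, h6]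
  field_simp
  ring

theorem LJ1r_eq (k₁ k₂ z : ℝ) : LJ1r k₁ k₂ z = k₁ * ((z ^ 6)⁻¹) ^ 2 - k₂ * (z ^ 6)⁻¹ := by
  rw [LJ1r]
  ring

theorem inv_add_pow_six_le {x y : ℝ} (hx : 0 < x) (hy : 0 < y) :
    ((x + y) ^ 6)⁻¹ ≤ ((x ^ 6)⁻¹ + (y ^ 6)⁻¹) / 2 / 64 := by
  have hamgm : 64 * (x ^ 3 * y ^ 3) ≤ (x + y) ^ 6 := by
    calc 64 * (x ^ 3 * y ^ 3) = (4 * (x * y)) ^ 3 := by ring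
      _ ≤ ((x + y) ^ 2) ^ 3 := by gcongr; nlinarith [sq_nonneg (x - y)]
      _ = (x + y) ^ 6 := by ring
  calc ((x + y) ^ 6)⁻¹ ≤ (64 * (x ^ 3 * y ^ 3))⁻¹ := inv_anti₀ (by positivity) hamgm
    _ = (x ^ 3)⁻¹ * (y ^ 3)⁻¹ / 64 := by field_simp
    _ ≤ (((x ^ 3)⁻¹) ^ 2 + ((y ^ 3)⁻¹) ^ 2) / 2 / 64 := by
        gcongr; nlinarith [sq_nonneg ((x ^ 3)⁻¹ - (y ^ 3)⁻¹)]
    _ = ((x ^ 6)⁻¹ + (y ^ 6)⁻¹) / 2 / 64 := by ring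

theorem JCBGammaNNN_le {k₁ k₂ x y : ℝ} (hk₁ : 0 < k₁) (hk₂ : 0 < k₂) (hx : 0 < x) (hy : 0 < y) :
    JCBGammaNNN k₁ k₂ ≤ LJ1r k₁ k₂ (x + y) + 1 / 2 * LJ1r k₁ k₂ x + 1 / 2 * LJ1r k₁ k₂ y := by
  set s := (x ^ 6)⁻¹
  set t := (y ^ 6)⁻¹
  have hbound := quadratic_sum_lower_bound hk₁ hk₂ (inv_add_pow_six_le hx hy)
  have hconvex : k₁ * ((s + t) / 2) ^ 2 - k₂ * ((s + t) / 2)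
      ≤ 1 / 2 * (k₁ * s ^ 2 - k₂ * s) + 1 / 2 * (k₁ * t ^ 2 - k₂ * t) := by
    nlinarith [mul_nonneg hk₁.le (sq_nonneg (s - t))]
  rw [JCBGammaNNN_eq hk₁ hk₂, LJ1r_eq, LJ1r_eq, LJ1r_eq]
  linarith

theorem continuousAt_LJ1r (k₁ k₂ : ℝ) {z : ℝ} (hz : z ≠ 0) : ContinuousAt (LJ1r k₁ k₂) z := by
  unfold LJ1r
  fun_prop (disch := exact pow_ne_zero _ hz)

theorem LJ1_of_pos (k₁ k₂ : ℝ) {z : ℝ} (hz : 0 < z) : LJ1 k₁ k₂ z = (LJ1r k₁ k₂ z : EReal) :=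
  if_pos hz

theorem coe_mul_LJ1_ne_bot (k₁ k₂ : ℝ) {c : ℝ} (hc : 0 < c) (z : ℝ) :
    (c : EReal) * LJ1 k₁ k₂ z ≠ ⊥ := by
  unfold LJ1
  split_ifs
  · exact EReal.coe_ne_bot _
  · rw [EReal.coe_mul_top_of_pos hc]; exact top_ne_bot

theorem coe_mul_LJ1_of_nonpos (k₁ k₂ : ℝ) {c z : ℝ} (hc : 0 < c) (hz : ¬ 0 < z) :
    (c : EReal) * LJ1 k₁ k₂ z = ⊤ := by
  rw [LJ1, if_neg hz, EReal.coe_mul_top_of_pos hc]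

theorem LJ1_ne_bot (k₁ k₂ z : ℝ) : LJ1 k₁ k₂ z ≠ ⊥ := by
  unfold LJ1
  split_ifs
  · exact EReal.coe_ne_bot _
  · exact top_ne_bot

theorem gammaNNN_pos {k₁ k₂ : ℝ} (hk₁ : 0 < k₁) (hk₂ : 0 < k₂) : 0 < gammaNNN k₁ k₂ := by
  unfold gammaNNN
  positivity

section Fcell

variable {k₁ k₂ : ℝ}

local notation "γ" => gammaNNN k₁ k₂

theorem Fcell_of_pos {a b : ℝ} (ha : 0 < γ + a) (hb : 0 < γ + b) :
    Fcell k₁ k₂ a b = ((LJ1r k₁ k₂ ((γ + a) + (γ + b)) + 1 / 2 * LJ1r k₁ k₂ (γ + a)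
      + 1 / 2 * LJ1r k₁ k₂ (γ + b) - JCBGammaNNN k₁ k₂ : ℝ) : EReal) := by
  have hab : 2 * (γ + (a + b) / 2) = (γ + a) + (γ + b) := by ring
  rw [Fcell, LJ2, hab, LJ1_of_pos _ _ (add_pos ha hb), LJ1_of_pos _ _ ha, LJ1_of_pos _ _ hb]
  norm_cast

theorem Fcell_eq_top {a b : ℝ} (h : ¬ (0 < γ + a ∧ 0 < γ + b)) : Fcell k₁ k₂ a b = ⊤ := by
  have hhalf : (0 : ℝ) < 1 / 2 := by norm_num
  rcases not_and_or.mp h with ha | hb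
  · rw [Fcell, LJ2, coe_mul_LJ1_of_nonpos _ _ hhalf ha,
      EReal.add_top_of_ne_bot (LJ1_ne_bot _ _ _),
      EReal.top_add_of_ne_bot (coe_mul_LJ1_ne_bot _ _ hhalf _), EReal.top_sub_coe]
  · rw [Fcell, coe_mul_LJ1_of_nonpos _ _ hhalf hb, EReal.add_top_of_ne_bot, EReal.top_sub_coe]
    exact EReal.add_ne_bot_iff.mpr ⟨LJ1_ne_bot _ _ _, coe_mul_LJ1_ne_bot _ _ hhalf _⟩

theorem Fcell_nonneg (hk₁ : 0 < k₁) (hk₂ : 0 < k₂) (a b : ℝ) : 0 ≤ Fcell k₁ k₂ a b := by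
  by_cases h : 0 < γ + a ∧ 0 < γ + b
  · rw [Fcell_of_pos h.1 h.2, EReal.coe_nonneg]
    linarith [JCBGammaNNN_le hk₁ hk₂ h.1 h.2]
  · rw [Fcell_eq_top h]
    exact le_top

theorem Fcell_zero_zero (hk₁ : 0 < k₁) (hk₂ : 0 < k₂) : Fcell k₁ k₂ 0 0 = 0 := by
  have hγ := gammaNNN_pos hk₁ hk₂
  rw [Fcell_of_pos (by simpa using hγ) (by simpa using hγ), JCBGammaNNN, EReal.coe_eq_zero]
  ring_nf

theorem tendsto_Fcell_zero_right (hk₁ : 0 < k₁) (hk₂ : 0 < k₂) :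
    Tendsto (fun a => Fcell k₁ k₂ a 0) (nhds 0) (nhds 0) := by
  have hγ := gammaNNN_pos hk₁ hk₂
  set g : ℝ → ℝ := fun a => LJ1r k₁ k₂ ((γ + a) + (γ + 0)) + 1 / 2 * LJ1r k₁ k₂ (γ + a)
      + 1 / 2 * LJ1r k₁ k₂ (γ + 0) - JCBGammaNNN k₁ k₂
  have hpos : ∀ᶠ a in nhds (0 : ℝ), 0 < γ + a :=
    continuousAt_const.eventually_lt (continuousAt_const.add continuousAt_id) (by simpa)
  have hg : ContinuousAt g 0 := by
    have h1 := continuousAt_LJ1r k₁ k₂ (z := (γ + 0) + (γ + 0)) (by positivity)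
    have h2 := continuousAt_LJ1r k₁ k₂ (z := γ + 0) (by positivity)
    fun_prop
  have hg0 : g 0 = 0 := by
    have := Fcell_zero_zero hk₁ hk₂
    rwa [Fcell_of_pos (by simpa using hγ) (by simpa using hγ), EReal.coe_eq_zero] at this
  have hlim : Tendsto (fun a => (g a : EReal)) (nhds 0) (nhds (g 0 : EReal)) :=
    (continuous_coe_real_ereal.tendsto _).comp hg.tendsto
  rw [hg0, EReal.coe_zero] at hlim
  exact hlim.congr' (hpos.mono fun a ha => (Fcell_of_pos ha (by simpa using hγ)).symm)

end Fcell

theorem Bgam_truncate_le {k₁ k₂ : ℝ} (hk₁ : 0 < k₁) (hk₂ : 0 < k₂) (r : ℕ → ℝ) (M : ℕ) :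
    Bgam k₁ k₂ (fun i => if i ≤ M then r i else 0) ≤ Bgam k₁ k₂ r + Fcell k₁ k₂ (r M) 0 := by
  set t : ℕ → ℝ := fun i => if i ≤ M then r i else 0
  have htail : ∀ i ∉ range (M + 1), Fcell k₁ k₂ (t i) (t (i + 1)) = 0 := by
    intro i hi
    simp only [Finset.mem_range, not_lt] at hi
    simp only [t, if_neg (show ¬i ≤ M by omega), if_neg (show ¬i + 1 ≤ M by omega)]
    exact Fcell_zero_zero hk₁ hk₂
  have hsum : ∑' i, Fcell k₁ k₂ (t i) (t (i + 1))
      = ∑ i ∈ range M, Fcell k₁ k₂ (r i) (r (i + 1)) + Fcell k₁ k₂ (r M) 0 := by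
    rw [tsum_eq_sum htail, Finset.sum_range_succ]
    congr 1
    · refine Finset.sum_congr rfl fun i hi => ?_
      have hi : i < M := Finset.mem_range.mp hi
      simp only [t, if_pos hi.le, if_pos (show i + 1 ≤ M by omega)]
    · simp only [t, le_refl, if_true, if_neg (show ¬M + 1 ≤ M by omega)]
  have hnonneg : ∀ i, 0 ≤ Fcell k₁ k₂ (r i) (r (i + 1)) := fun i => Fcell_nonneg hk₁ hk₂ _ _
  have hpartial : ∑ i ∈ range M, Fcell k₁ k₂ (r i) (r (i + 1))
      ≤ ∑' i, Fcell k₁ k₂ (r i) (r (i + 1)) :=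
    ((hasSum_of_isLUB_of_nonneg _ hnonneg isLUB_iSup).summable).sum_le_tsum _
      fun i _ => hnonneg i
  rw [Bgam, Bgam, hsum, add_assoc]
  simp only [t, zero_le, if_true]
  gcongr

/-- the infimum of `B_γ` over sequences which vanish eventually equals its
infimum over sequences tending to `0`. -/
theorem boundary_layer_inf_eq (k₁ k₂ : ℝ) (hk₁ : 0 < k₁) (hk₂ : 0 < k₂) :
    sInf {y : EReal | ∃ r : ℕ → ℝ, (∃ N : ℕ, ∀ i ≥ N, r i = 0) ∧ y = Bgam k₁ k₂ r} =
      sInf {y : EReal | ∃ r : ℕ → ℝ,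
        Filter.Tendsto r Filter.atTop (nhds 0) ∧ y = Bgam k₁ k₂ r} := by
  apply le_antisymm
  · refine le_sInf ?_
    rintro _ ⟨r, hr, rfl⟩
    have hlim : Tendsto (fun M => Bgam k₁ k₂ r + Fcell k₁ k₂ (r M) 0) atTop
        (nhds (Bgam k₁ k₂ r)) := by
      have hadd := EReal.continuousAt_add (p := (Bgam k₁ k₂ r, 0))
        (Or.inr EReal.zero_ne_bot) (Or.inr EReal.zero_ne_top)
      simpa [Function.comp_def] using hadd.tendsto.comp
        (tendsto_const_nhds.prodMk_nhds ((tendsto_Fcell_zero_right hk₁ hk₂).comp hr))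
    refine ge_of_tendsto hlim (Eventually.of_forall fun M => ?_)
    refine (sInf_le ?_).trans (Bgam_truncate_le hk₁ hk₂ r M)
    exact ⟨_, ⟨M + 1, fun i hi => if_neg (by omega)⟩, rfl⟩
  · refine sInf_le_sInf ?_
    rintro _ ⟨r, ⟨N, hN⟩, rfl⟩
    have hev : (fun _ => (0 : ℝ)) =ᶠ[atTop] r :=
      eventually_atTop.mpr ⟨N, fun i hi => (hN i hi).symm⟩
    exact ⟨r, tendsto_const_nhds.congr' hev, rfl⟩
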